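/- For all nonempty metric spaces X, Y, Z, the distance D satisfies the triangle inequality D(X,Z) ≤ D(X,Y) + D(Y,Z), where the values are taken in [0, ∞]. -/

import Mathlib

open ENNReal

/-- A correspondence between X and Y: both projections are surjective. -/
def IsCorrespondence {X Y : Type*} (R : Set (X × Y)) : Prop :=
  (∀ x : X, ∃ y : Y, (x, y) ∈ R) ∧ (∀ y : Y, ∃ x : X, (x, y) ∈ R)

/-- The quasi-isometric distortion of a correspondence, in [0,∞]. -/
noncomputable def qDis {X Y : Type*} [MetricSpace X] [MetricSpace Y]
    (R : Set (X × Y)) : ℝ≥0∞ :=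
  sInf {e : ℝ≥0∞ | ∃ r : ℝ, 0 < r ∧ e = ENNReal.ofReal r ∧
    ∀ p ∈ R, ∀ q ∈ R,
      Real.exp (-r) * dist p.2 q.2 - Real.exp r + 1 ≤ dist p.1 q.1 ∧
      dist p.1 q.1 ≤ Real.exp r * dist p.2 q.2 + Real.exp (2 * r) - Real.exp r}

/-- The distance D, infimum of quasi-isometric distortions of correspondences. -/
noncomputable def Ddist (X Y : Type*) [MetricSpace X] [MetricSpace Y] : ℝ≥0∞ :=
  ⨅ R : {R : Set (X × Y) // IsCorrespondence R}, qDis R.1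

lemma comp_corr {X Y Z : Type*} {R₁ : Set (X × Y)} {R₂ : Set (Y × Z)}
    (h₁ : IsCorrespondence R₁) (h₂ : IsCorrespondence R₂) :
    IsCorrespondence {p : X × Z | ∃ y : Y, (p.1, y) ∈ R₁ ∧ (y, p.2) ∈ R₂} := by
  constructor
  · intro x
    obtain ⟨y, hy⟩ := h₁.1 x
    obtain ⟨z, hz⟩ := h₂.1 y
    exact ⟨z, y, hy, hz⟩
  · intro z
    obtain ⟨y, hy⟩ := h₂.2 z
    obtain ⟨x, hx⟩ := h₁.2 y
    exact ⟨x, y, hx, hy⟩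

lemma le_sInf_add_sInf {c : ℝ≥0∞} {S₁ S₂ : Set ℝ≥0∞}
    (h : ∀ x ∈ S₁, ∀ y ∈ S₂, c ≤ x + y) : c ≤ sInf S₁ + sInf S₂ := by
  rw [ENNReal.sInf_add]
  refine le_iInf₂ fun x hx => ?_
  rw [add_comm, ENNReal.sInf_add]
  refine le_iInf₂ fun y hy => ?_
  rw [add_comm]
  exact h x hx y hy

lemma qDis_comp {X Y Z : Type*} [MetricSpace X] [MetricSpace Y] [MetricSpace Z]
    (R₁ : Set (X × Y)) (R₂ : Set (Y × Z)) :
    qDis {p : X × Z | ∃ y : Y, (p.1, y) ∈ R₁ ∧ (y, p.2) ∈ R₂} ≤ qDis R₁ + qDis R₂ := by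
  refine le_sInf_add_sInf ?_
  rintro a ⟨r, hr, rfl, hR₁⟩ b ⟨s, hs, rfl, hR₂⟩
  rw [← ENNReal.ofReal_add hr.le hs.le]
  refine sInf_le ⟨r + s, by linarith, rfl, ?_⟩
  rintro ⟨x, z⟩ ⟨y, hxy, hyz⟩ ⟨x', z'⟩ ⟨y', hxy', hyz'⟩
  obtain ⟨hlo₁, hhi₁⟩ := hR₁ (x, y) hxy (x', y') hxy'
  obtain ⟨hlo₂, hhi₂⟩ := hR₂ (y, z) hyz (y', z') hyz'
  simp only at *
  have ha : (1:ℝ) ≤ Real.exp r := Real.one_le_exp hr.le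
  have hb : (1:ℝ) ≤ Real.exp s := Real.one_le_exp hs.le
  have her : (0:ℝ) < Real.exp (-r) := Real.exp_pos _
  have hes : (0:ℝ) < Real.exp (-s) := Real.exp_pos _
  have hdz : (0:ℝ) ≤ dist z z' := dist_nonneg
  have e1 : Real.exp (-(r+s)) = Real.exp (-r) * Real.exp (-s) := by
    rw [← Real.exp_add]; ring_nf
  have e2 : Real.exp (r+s) = Real.exp r * Real.exp s := by rw [← Real.exp_add]
  have e3 : Real.exp (2*(r+s)) = Real.exp r * Real.exp r * Real.exp s * Real.exp s := by
    rw [show (2:ℝ)*(r+s) = r + r + s + s by ring, Real.exp_add, Real.exp_add, Real.exp_add]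
  have e4 : Real.exp (2*r) = Real.exp r * Real.exp r := by
    rw [show (2:ℝ)*r = r + r by ring, Real.exp_add]
  have e5 : Real.exp (2*s) = Real.exp s * Real.exp s := by
    rw [show (2:ℝ)*s = s + s by ring, Real.exp_add]
  have emr : Real.exp (-r) * Real.exp r = 1 := by rw [← Real.exp_add]; simp
  have ems : Real.exp (-s) * Real.exp s = 1 := by rw [← Real.exp_add]; simp
  have hA' : Real.exp (-r) ≤ Real.exp r := by nlinarith [Real.exp_pos (-r)]
  have key1 : 0 ≤ (Real.exp r - Real.exp (-r)) * (Real.exp s - 1) :=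
    mul_nonneg (by linarith) (by linarith)
  have key2 : 0 ≤ (Real.exp r * (Real.exp r - 1)) * (Real.exp s * Real.exp s - 1) :=
    mul_nonneg (mul_nonneg (Real.exp_pos r).le (by linarith)) (by nlinarith)
  constructor
  · rw [e1, e2]
    nlinarith [mul_le_mul_of_nonneg_left hlo₂ her.le, key1]
  · rw [e2, e3]
    nlinarith [mul_le_mul_of_nonneg_left hhi₂ (Real.exp_pos r).le, key2]

/-- The distance D satisfies the triangle inequality. -/
theorem Ddist_triangle
    (X Y Z : Type*) [MetricSpace X] [MetricSpace Y] [MetricSpace Z]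
    [Nonempty X] [Nonempty Y] [Nonempty Z] :
    Ddist X Z ≤ Ddist X Y + Ddist Y Z := by
  rw [Ddist, Ddist, Ddist, ENNReal.iInf_add]
  refine le_iInf fun ⟨R₁, h₁⟩ => ?_
  rw [ENNReal.add_iInf]
  refine le_iInf fun ⟨R₂, h₂⟩ => ?_
  calc Ddist X Z ≤ qDis {p : X × Z | ∃ y : Y, (p.1, y) ∈ R₁ ∧ (y, p.2) ∈ R₂} :=
        iInf_le (fun R : {R : Set (X × Z) // IsCorrespondence R} => qDis R.1) ⟨_, comp_corr h₁ h₂⟩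
    _ ≤ qDis R₁ + qDis R₂ := qDis_comp R₁ R₂
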